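/- In the nonsymmetric operad with one binary generator f and the single relation f(f(a,b),c) + f(a,f(b,c)) = 0 (anti-associativity), the element f(a, f(b, f(c, d))) lies in the operadic ideal generated by the relation; equivalently, every composition of f of arity ≥ 4 vanishes in the anti-associative operad. -/
import Mathlib

/-!
Statement 7.  The anti-associative nonsymmetric operad: one binary generator `f`,
one relation `f(f(a,b),c) + f(a,f(b,c)) = 0`.  The free nonsymmetric operad on one
binary generator has basis the planar binary trees; the operadic ideal generated by
the relation is the span of all groundings of the relation in a context: an outer
tree `o` with a marked leaf `i`, into which the two trees of the relation, with
subtrees `s₁,s₂,s₃` grafted into their leaves, are substituted.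

Claim: `f(a, f(b, f(c, d)))` lies in the operadic ideal generated by the relation.
-/

/-- Planar binary trees: basis of the free ns operad on one binary generation `f`. -/
inductive BT : Type
  | leaf : BT
  | node : BT → BT → BT
deriving DecidableEq

namespace BT

/-- Number of leaves. -/
def leaves : BT → ℕ
  | leaf => 1
  | node l r => leaves l + leaves r

/-- `graft t i s`: replace the `i`-th leaf (counting from the left, from 0) of `t`
by the tree `s`.  This is the partial composition `t ∘_{i+1} s` of the free operad. -/
def graft : BT → ℕ → BT → BT
  | leaf, 0, s => s
  | leaf, _ + 1, _ => leaf
  | node l r, i, s =>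
      if i < leaves l then node (graft l i s) r else node l (graft r (i - leaves l) s)

end BT

open BT

/-- The operadic ideal generated by the anti-associativity relation
`f(f(-,-),-) + f(-,f(-,-))`: the span of all substitutions of the relation, with
arbitrary subtrees `s₁,s₂,s₃` grafted into its three leaves, into the `i`-th leaf of an
arbitrary outer tree `o`. -/
noncomputable def antiAssocIdeal : Submodule ℚ (BT →₀ ℚ) :=
  Submodule.span ℚ
    {x | ∃ (o : BT) (i : ℕ) (s₁ s₂ s₃ : BT),
      x = Finsupp.single (graft o i (node (node s₁ s₂) s₃)) 1 +
          Finsupp.single (graft o i (node s₁ (node s₂ s₃))) 1}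

/-- `f(a, f(b, f(c, d)))` lies in the operadic ideal generated by the anti-associativity
relation (hence vanishes in the anti-associative operad `Ãs`). -/
theorem antiAssoc_arity4_vanishes :
    Finsupp.single (node leaf (node leaf (node leaf leaf))) (1 : ℚ) ∈ antiAssocIdeal := by
  classical
  -- the five binary trees with 4 leaves
  set T1 := node (node (node leaf leaf) leaf) leaf with hT1
  set T2 := node (node leaf (node leaf leaf)) leaf with hT2
  set T3 := node (node leaf leaf) (node leaf leaf) with hT3
  set T4 := node leaf (node (node leaf leaf) leaf) with hT4
  set T5 := node leaf (node leaf (node leaf leaf)) with hT5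
  -- generators
  have h1 : (Finsupp.single T1 1 + Finsupp.single T3 (1:ℚ)) ∈ antiAssocIdeal := by
    apply Submodule.subset_span
    exact ⟨leaf, 0, node leaf leaf, leaf, leaf, by simp [graft, hT1, hT3]⟩
  have h2 : (Finsupp.single T2 1 + Finsupp.single T4 (1:ℚ)) ∈ antiAssocIdeal := by
    apply Submodule.subset_span
    exact ⟨leaf, 0, leaf, node leaf leaf, leaf, by simp [graft, hT2, hT4]⟩
  have h3 : (Finsupp.single T3 1 + Finsupp.single T5 (1:ℚ)) ∈ antiAssocIdeal := by
    apply Submodule.subset_span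
    exact ⟨leaf, 0, leaf, leaf, node leaf leaf, by simp [graft, hT3, hT5]⟩
  have h4 : (Finsupp.single T1 1 + Finsupp.single T2 (1:ℚ)) ∈ antiAssocIdeal := by
    apply Submodule.subset_span
    exact ⟨node leaf leaf, 0, leaf, leaf, leaf, by simp [graft, leaves, hT1, hT2]⟩
  have h5 : (Finsupp.single T4 1 + Finsupp.single T5 (1:ℚ)) ∈ antiAssocIdeal := by
    apply Submodule.subset_span
    exact ⟨node leaf leaf, 1, leaf, leaf, leaf, by simp [graft, leaves, hT4, hT5]⟩
  have key : Finsupp.single T5 (1:ℚ) =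
      (1/2 : ℚ) • (Finsupp.single T4 1 + Finsupp.single T5 (1:ℚ))
      + (1/2 : ℚ) • (Finsupp.single T1 1 + Finsupp.single T2 (1:ℚ))
      + (1/2 : ℚ) • (Finsupp.single T3 1 + Finsupp.single T5 (1:ℚ))
      - (1/2 : ℚ) • (Finsupp.single T2 1 + Finsupp.single T4 (1:ℚ))
      - (1/2 : ℚ) • (Finsupp.single T1 1 + Finsupp.single T3 (1:ℚ)) := by
    ext t
    simp only [Finsupp.coe_add, Finsupp.coe_sub, Finsupp.coe_smul, Pi.add_apply,
      Pi.sub_apply, Pi.smul_apply, Finsupp.single_apply, smul_eq_mul]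
    split_ifs <;> simp_all <;> ring
  rw [key]
  exact sub_mem (sub_mem (add_mem (add_mem (Submodule.smul_mem _ _ h5)
    (Submodule.smul_mem _ _ h4)) (Submodule.smul_mem _ _ h3))
    (Submodule.smul_mem _ _ h2)) (Submodule.smul_mem _ _ h1)
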